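/- Let α ∈ (0,π), θ ∈ (0,π), and set x = (1+cos θ)/2 ∈ (0,1). Define a = −2(1−cos α)(1−x), b = 4 sin α · √(x(1−x)), c = 2(1−cos α)·x. Then the quadratic polynomial s ↦ a s² + b s + c has the two real roots s₁ = −tan(α/4)·cot(θ/2) and s₂ = cot(α/4)·cot(θ/2) (s₁ ≤ s₂). Moreover s₁ ≤ −1 if and only if θ ≤ α/2, and s₂ ≥ 1 if and only if θ ≤ π − α/2, and s₂ − s₁ = (2/ sin(α/2))·cot(θ/2). -/

import Mathlib

/-! Put `u = α/4` and `v = θ/2`. Then `x = cos² v`, `√(x(1-x)) = sin v cos v`,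
`1 - cos α = 8 sin² u cos² u` and `sin α = 4 sin u cos u (cos² u - sin² u)`, and in these
variables the quadratic factors as
`-16 sin u cos u (sin u sin v s - cos u cos v) (cos u sin v s + sin u cos v)`.
Its roots are therefore `cot u cot v` and `-tan u cot v`; the inequalities reduce to the
monotonicity of `tan` on `(-π/2, π/2)`, and the gap between the roots comes from
`tan u + cot u = 2 / sin (2u)`. -/

open Real

namespace Real

lemma one_add_cos_div_two (θ : ℝ) : (1 + cos θ) / 2 = cos (θ / 2) ^ 2 := by
  rw [cos_sq, mul_div_cancel₀ θ two_ne_zero]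
  ring

lemma sqrt_one_add_cos_div_two_mul {θ : ℝ} (h0 : 0 ≤ θ) (hπ : θ ≤ π) :
    √((1 + cos θ) / 2 * (1 - (1 + cos θ) / 2)) = sin (θ / 2) * cos (θ / 2) := by
  have hs : 0 ≤ sin (θ / 2) := sin_nonneg_of_nonneg_of_le_pi (by linarith) (by linarith)
  have hc : 0 ≤ cos (θ / 2) := cos_nonneg_of_mem_Icc ⟨by linarith, by linarith⟩
  rw [one_add_cos_div_two, ← sin_sq, ← sqrt_sq (mul_nonneg hs hc)]
  ring_nf

lemma one_add_cos_div_two_mem_Ioo {θ : ℝ} (hθ : θ ∈ Set.Ioo 0 π) :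
    (1 + cos θ) / 2 ∈ Set.Ioo 0 1 := by
  have h1 := cos_lt_cos_of_nonneg_of_le_pi le_rfl hθ.2.le hθ.1
  have h2 := cos_lt_cos_of_nonneg_of_le_pi hθ.1.le le_rfl hθ.2
  rw [cos_zero] at h1
  rw [cos_pi] at h2
  constructor <;> linarith

lemma one_sub_cos_four_mul (u : ℝ) : 1 - cos (4 * u) = 8 * sin u ^ 2 * cos u ^ 2 := by
  rw [show 4 * u = 2 * (2 * u) by ring, cos_two_mul, cos_sq', sin_two_mul]
  ring

lemma sin_four_mul (u : ℝ) : sin (4 * u) = 4 * sin u * cos u * (cos u ^ 2 - sin u ^ 2) := by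
  rw [show 4 * u = 2 * (2 * u) by ring, sin_two_mul, sin_two_mul, cos_two_mul, cos_sq']
  ring

lemma tan_add_cot (x : ℝ) : tan x + cot x = 2 / sin (2 * x) := by
  rw [tan_eq_sin_div_cos, cot_eq_cos_div_sin, sin_two_mul]
  rcases eq_or_ne (sin x) 0 with hs | hs
  · simp [hs]
  rcases eq_or_ne (cos x) 0 with hc | hc
  · simp [hc]
  field_simp
  linear_combination sin_sq_add_cos_sq x

lemma one_le_tan_mul_cot_iff {u v : ℝ} (hu : u ∈ Set.Ioo (-(π / 2)) (π / 2))
    (hv : v ∈ Set.Ioo 0 (π / 2)) : 1 ≤ tan u * cot v ↔ v ≤ u := by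
  rw [← tan_inv_eq_cot, ← div_eq_mul_inv, one_le_div₀ (tan_pos_of_pos_of_lt_pi_div_two hv.1 hv.2)]
  exact strictMonoOn_tan.le_iff_le ⟨by linarith [hv.1, pi_pos], hv.2⟩ hu

end Real

lemma quadratic_eq_mul_factors (α θ s : ℝ) (h0 : 0 ≤ θ) (hπ : θ ≤ π) :
    -2 * (1 - cos α) * (1 - (1 + cos θ) / 2) * s ^ 2
        + 4 * sin α * √((1 + cos θ) / 2 * (1 - (1 + cos θ) / 2)) * s
        + 2 * (1 - cos α) * ((1 + cos θ) / 2)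
      = -16 * sin (α / 4) * cos (α / 4)
        * (sin (α / 4) * sin (θ / 2) * s - cos (α / 4) * cos (θ / 2))
        * (cos (α / 4) * sin (θ / 2) * s + sin (α / 4) * cos (θ / 2)) := by
  have h1 := one_sub_cos_four_mul (α / 4)
  have h2 := sin_four_mul (α / 4)
  rw [show 4 * (α / 4) = α by ring] at h1 h2
  rw [sqrt_one_add_cos_div_two_mul h0 hπ, one_add_cos_div_two, ← sin_sq, h1, h2]
  ring

theorem quadratic_roots_classifier
    (α θ : ℝ) (hα : α ∈ Set.Ioo 0 Real.pi) (hθ : θ ∈ Set.Ioo 0 Real.pi) :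
    let x : ℝ := (1 + Real.cos θ) / 2
    let a : ℝ := -2 * (1 - Real.cos α) * (1 - x)
    let b : ℝ := 4 * Real.sin α * Real.sqrt (x * (1 - x))
    let c : ℝ := 2 * (1 - Real.cos α) * x
    let s₁ : ℝ := -Real.tan (α / 4) * Real.cot (θ / 2)
    let s₂ : ℝ := Real.cot (α / 4) * Real.cot (θ / 2)
    x ∈ Set.Ioo (0 : ℝ) 1 ∧
    a * s₁ ^ 2 + b * s₁ + c = 0 ∧
    a * s₂ ^ 2 + b * s₂ + c = 0 ∧
    s₁ ≤ s₂ ∧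
    (s₁ ≤ -1 ↔ θ ≤ α / 2) ∧
    (1 ≤ s₂ ↔ θ ≤ Real.pi - α / 2) ∧
    s₂ - s₁ = 2 / Real.sin (α / 2) * Real.cot (θ / 2) := by
  intro x a b c s₁ s₂
  obtain ⟨hα0, hαπ⟩ := hα
  obtain ⟨hθ0, hθπ⟩ := hθ
  have hsu : 0 < sin (α / 4) := sin_pos_of_pos_of_lt_pi (by linarith) (by linarith)
  have hcu : 0 < cos (α / 4) := cos_pos_of_mem_Ioo ⟨by linarith, by linarith⟩
  have hsv : 0 < sin (θ / 2) := sin_pos_of_pos_of_lt_pi (by linarith) (by linarith)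
  have hcv : 0 < cos (θ / 2) := cos_pos_of_mem_Ioo ⟨by linarith, by linarith⟩
  have hgap : s₂ - s₁ = 2 / sin (α / 2) * cot (θ / 2) := by
    rw [show α / 2 = 2 * (α / 4) by ring, ← tan_add_cot]
    ring
  have hcot : 0 < cot (θ / 2) := by rw [cot_eq_cos_div_sin]; positivity
  have hv : θ / 2 ∈ Set.Ioo 0 (π / 2) := ⟨by linarith, by linarith⟩
  refine ⟨one_add_cos_div_two_mem_Ioo ⟨hθ0, hθπ⟩, ?_, ?_, ?_, ?_, ?_, hgap⟩
  · rw [quadratic_eq_mul_factors α θ s₁ hθ0.le hθπ.le]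
    simp only [s₁, tan_eq_sin_div_cos, cot_eq_cos_div_sin]
    field_simp
    ring
  · rw [quadratic_eq_mul_factors α θ s₂ hθ0.le hθπ.le]
    simp only [s₂, cot_eq_cos_div_sin]
    field_simp
    ring
  · have : 0 < 2 / sin (α / 2) * cot (θ / 2) :=
      mul_pos (div_pos two_pos (sin_pos_of_pos_of_lt_pi (by linarith) (by linarith))) hcot
    linarith
  · rw [show s₁ ≤ -1 ↔ 1 ≤ tan (α / 4) * cot (θ / 2) by constructor <;> intro <;> linarith,
      one_le_tan_mul_cot_iff ⟨by linarith, by linarith⟩ hv]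
    constructor <;> intro <;> linarith
  · rw [show s₂ = tan (π / 2 - α / 4) * cot (θ / 2) by rw [tan_pi_div_two_sub, tan_inv_eq_cot],
      one_le_tan_mul_cot_iff ⟨by linarith, by linarith⟩ hv]
    constructor <;> intro <;> linarith
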